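/- arXiv:2105.12099 — 2 statements merged into one kernel-verified Lean document; each statement's English description precedes it below -/
import Mathlib

section
/- Let G be a finite additive abelian group, let d₁, d₂ : G → ℝ and g : G → ℝ be arbitrary functions, let α_f, α_s > 0, and let p, q ∈ (1, ∞) satisfy 1/p + 1/q = 1. Define the gradient image (Dg)(r) = ((d₁⋆g)(r), (d₂⋆g)(r)) ∈ ℝ², the Hessian image (Hg)(r), a real symmetric 2×2 matrix with (i,j) entry (dᵢ⋆dⱼ⋆g)(r), and for u : G → ℝ² the symmetrized Jacobian image E(u)(r), a real symmetric 2×2 matrix with (i,j) entry ½((dⱼ⋆uᵢ)(r) + (dᵢ⋆uⱼ)(r)). For a symmetric-matrix image N : G → Sym₂(ℝ), define the vector image (N⋆d̃)(r) ∈ ℝ² whose i-th component is (Nᵢ₁⋆d̃₁)(r) + (Nᵢ₂⋆d̃₂)(r). Then the infimum over all u : G → ℝ² of α_f·Σ_{r∈G} ‖(Dg)(r) − u(r)‖₂ + α_s·Σ_{r∈G} ‖E(u)(r)‖_{S(p)} equals the supremum of Σ_{r∈G} trace(N(r)·(Hg)(r)) over all symmetric-matrix images N : G → Sym₂(ℝ)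 satisfying ‖N(r)‖_{S(q)} ≤ α_s for every r ∈ G and ‖(N⋆d̃)(r)‖₂ ≤ α_f for every r ∈ G. -/
/-!
Weak duality comes from adjointness: `Σ tr(N · E(u)) = Σ ⟨u, N⋆d̃⟩` for symmetric `N`, and
`Hg = E(Dg)`, so the dual objective is `Σ ⟨Dg − u, N⋆d̃⟩ + Σ tr(N · E(u))`, which Hölder's
inequality in `ℝ²` and its Schatten version `tr(AB) ≤ ‖A‖_{S(p)} ‖B‖_{S(q)}` (von Neumann's trace
inequality, elementary for symmetric `2 × 2` matrices) bound by the primal objective at `u`.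

For strong duality, relax the constraint `v = N⋆d̃` with a multiplier `u`. The pairs `(v, N)` range
over a compact convex product of balls, and the maximum over it of the Lagrangian
`Σ ⟨Dg − u, v⟩ + Σ tr(N · E(u))` is the primal objective at `u`, since both Hölder inequalities are
attained. If `c` exceeds the dual supremum, `(0, c)` lies outside the compact convex image of
`(v, N) ↦ (N⋆d̃ − v, Σ ⟨Dg, v⟩)`; the normal of a separating hyperplane yields a `u` whose primal
value is below `c`.
-/

open scoped BigOperators
open Matrix

namespace GHSN

variable {G : Type*} [AddCommGroup G] [Fintype G]

/-- Convolution of two functions on a finite abelian group. -/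
noncomputable def conv (f g : G → ℝ) : G → ℝ := fun r => ∑ s, f s * g (r - s)

/-- The flipped filter `f̃(r) = f(−r)`. -/
def flipF (f : G → ℝ) : G → ℝ := fun r => f (-r)

/-- The Euclidean norm on `ℝ²`. -/
noncomputable def euclNorm2 (v : Fin 2 → ℝ) : ℝ := Real.sqrt (v 0 ^ 2 + v 1 ^ 2)

/-- The gradient image `(Dg)(r) = ((d₁⋆g)(r), (d₂⋆g)(r))`. -/
noncomputable def grad (d₁ d₂ g : G → ℝ) (r : G) : Fin 2 → ℝ :=
  ![conv d₁ g r, conv d₂ g r]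

/-- The Hessian image: `(Hg)(r)` has `(i,j)` entry `(dᵢ⋆dⱼ⋆g)(r)`. -/
noncomputable def hess (d₁ d₂ g : G → ℝ) (r : G) : Matrix (Fin 2) (Fin 2) ℝ :=
  !![conv d₁ (conv d₁ g) r, conv d₁ (conv d₂ g) r;
     conv d₂ (conv d₁ g) r, conv d₂ (conv d₂ g) r]

/-- The symmetrized Jacobian image of a vector image `u : G → ℝ²`: a symmetric
2×2 matrix with `(i,j)` entry `½((dⱼ⋆uᵢ)(r) + (dᵢ⋆uⱼ)(r))`. -/
noncomputable def symJac (d₁ d₂ : G → ℝ) (u : G → Fin 2 → ℝ) (r : G) :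
    Matrix (Fin 2) (Fin 2) ℝ :=
  !![(conv d₁ (fun s => u s 0) r + conv d₁ (fun s => u s 0) r) / 2,
     (conv d₂ (fun s => u s 0) r + conv d₁ (fun s => u s 1) r) / 2;
     (conv d₁ (fun s => u s 1) r + conv d₂ (fun s => u s 0) r) / 2,
     (conv d₂ (fun s => u s 1) r + conv d₂ (fun s => u s 1) r) / 2]

lemma symJac_isHermitian (d₁ d₂ : G → ℝ) (u : G → Fin 2 → ℝ) (r : G) :
    (symJac d₁ d₂ u r).IsHermitian :=
  Matrix.ext fun i j => by
    fin_cases i <;> fin_cases j <;>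
      simp [symJac, Matrix.conjTranspose_apply] <;> ring

/-- The vector image `(N⋆d̃)(r)` with `i`-th component
`(Nᵢ₁⋆d̃₁)(r) + (Nᵢ₂⋆d̃₂)(r)`. -/
noncomputable def divN (d₁ d₂ : G → ℝ) (N : G → Matrix (Fin 2) (Fin 2) ℝ) (r : G) :
    Fin 2 → ℝ :=
  fun i => conv (fun s => N s i 0) (flipF d₁) r + conv (fun s => N s i 1) (flipF d₂) r

section PNorm

variable {ι : Type*} [Fintype ι]

noncomputable def pnorm (p : ℝ) (x : ι → ℝ) : ℝ := (∑ i, |x i| ^ p) ^ (1 / p)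

lemma pnorm_nonneg (p : ℝ) (x : ι → ℝ) : 0 ≤ pnorm p x := by
  unfold pnorm; positivity

lemma pnorm_zero {p : ℝ} (hp : p ≠ 0) : pnorm p (0 : ι → ℝ) = 0 := by
  simp [pnorm, Real.zero_rpow hp, Real.zero_rpow (inv_ne_zero hp)]

lemma abs_le_pnorm {p : ℝ} (hp : 0 < p) (x : ι → ℝ) (i : ι) : |x i| ≤ pnorm p x := by
  calc |x i| = (|x i| ^ p) ^ (1 / p) := by
        rw [← Real.rpow_mul (abs_nonneg _), mul_one_div_cancel hp.ne', Real.rpow_one]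
    _ ≤ pnorm p x := by
        refine Real.rpow_le_rpow (by positivity) ?_ (by positivity)
        exact Finset.single_le_sum (f := fun j => |x j| ^ p) (fun j _ => by positivity)
          (Finset.mem_univ i)

lemma continuous_pnorm {p : ℝ} (hp : 0 < p) : Continuous (pnorm (ι := ι) p) := by
  unfold pnorm
  refine Continuous.rpow_const ?_ fun _ => Or.inr (by positivity)
  exact continuous_finsetSum _ fun i _ =>
    (continuous_apply i).abs.rpow_const fun _ => Or.inr hp.le

lemma dotProduct_le_pnorm_mul_pnorm {p q : ℝ} (hpq : p.HolderConjugate q) (x y : ι → ℝ) :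
    x ⬝ᵥ y ≤ pnorm p x * pnorm q y :=
  Real.inner_le_Lp_mul_Lq Finset.univ x y hpq

lemma exists_pnorm_le_dotProduct_eq {p q α : ℝ} (hpq : p.HolderConjugate q) (hα : 0 ≤ α)
    (x : ι → ℝ) : ∃ y : ι → ℝ, pnorm q y ≤ α ∧ x ⬝ᵥ y = α * pnorm p x := by
  obtain hn | hn := (pnorm_nonneg p x).eq_or_lt
  · exact ⟨0, by rwa [pnorm_zero hpq.symm.ne_zero], by simp [← hn]⟩
  set n := pnorm p x
  set a : ι → ℝ := fun i => |x i| / n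
  have ha : ∀ i, 0 ≤ a i := fun i => by positivity
  have hsum : ∑ i, a i ^ p = 1 := by
    have hnp : n ^ p = ∑ i, |x i| ^ p := by
      simp only [n, pnorm, one_div]
      exact Real.rpow_inv_rpow (by positivity) hpq.ne_zero
    simp only [a, Real.div_rpow (abs_nonneg _) hn.le, ← Finset.sum_div, ← hnp]
    exact div_self (by positivity)
  have hpow : ∀ i, a i * a i ^ (p - 1) = a i ^ p := fun i => by
    rw [mul_comm, ← Real.rpow_add_one' (ha i) (by linarith [hpq.lt]), sub_add_cancel]
  -- the equality case of Hölder's inequality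
  refine ⟨fun i => α * SignType.sign (x i) * a i ^ (p - 1), ?_, ?_⟩
  · have habs : ∀ i, |α * SignType.sign (x i) * a i ^ (p - 1)| ^ q = α ^ q * a i ^ p := by
      intro i
      rcases eq_or_ne (x i) 0 with hx | hx
      · simp [a, hx, Real.zero_rpow hpq.sub_one_ne_zero, Real.zero_rpow hpq.ne_zero,
          Real.zero_rpow hpq.symm.ne_zero]
      · have hsign : |(SignType.sign (x i) : ℝ)| = 1 := by
          rcases hx.lt_or_gt with h | h <;> simp [h]
        rw [abs_mul, abs_mul, abs_of_nonneg hα, abs_of_nonneg (Real.rpow_nonneg (ha i) _), hsign,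
          mul_one, Real.mul_rpow hα (by positivity), ← Real.rpow_mul (ha i), hpq.sub_one_mul_conj]
    simp only [pnorm, habs, ← Finset.mul_sum, hsum, mul_one]
    rw [← Real.rpow_mul hα, mul_one_div_cancel hpq.symm.ne_zero, Real.rpow_one]
  · have hx : ∀ i, x i * (α * SignType.sign (x i) * a i ^ (p - 1)) = α * n * a i ^ p := by
      intro i
      rw [← hpow, show x i * (α * SignType.sign (x i) * a i ^ (p - 1)) =
        α * (SignType.sign (x i) * x i) * a i ^ (p - 1) by ring, sign_mul_self]
      simp only [a]
      field_simp
    simp only [dotProduct, hx, ← Finset.mul_sum, hsum, mul_one]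

lemma pnorm_le_iff {p q α : ℝ} (hpq : p.HolderConjugate q) (y : ι → ℝ) :
    pnorm q y ≤ α ↔ ∀ x : ι → ℝ, pnorm p x ≤ 1 → x ⬝ᵥ y ≤ α := by
  refine ⟨fun hy x hx => ?_, fun h => ?_⟩
  · calc x ⬝ᵥ y ≤ pnorm p x * pnorm q y := dotProduct_le_pnorm_mul_pnorm hpq x y
      _ ≤ 1 * α := mul_le_mul hx hy (pnorm_nonneg q y) zero_le_one
      _ = α := one_mul α
  · obtain ⟨x, hx, hxy⟩ := exists_pnorm_le_dotProduct_eq hpq.symm zero_le_one y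
    rw [dotProduct_comm, one_mul] at hxy
    exact hxy ▸ h x hx

lemma convex_pnorm_le {p q : ℝ} (hpq : p.HolderConjugate q) (α : ℝ) :
    Convex ℝ {y : ι → ℝ | pnorm q y ≤ α} := by
  intro y hy z hz a b ha hb hab
  simp only [Set.mem_ofPred_eq, pnorm_le_iff hpq] at hy hz ⊢
  intro x hx
  calc x ⬝ᵥ (a • y + b • z) = a * x ⬝ᵥ y + b * x ⬝ᵥ z := by
        rw [dotProduct_add, dotProduct_smul, dotProduct_smul, smul_eq_mul, smul_eq_mul]
    _ ≤ a * α + b * α :=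
        add_le_add (mul_le_mul_of_nonneg_left (hy x hx) ha) (mul_le_mul_of_nonneg_left (hz x hx) hb)
    _ = α := by rw [← add_mul, hab, one_mul]

lemma isCompact_pnorm_le {p : ℝ} (hp : 0 < p) (α : ℝ) :
    IsCompact {x : ι → ℝ | pnorm p x ≤ α} :=
  (isCompact_univ_pi fun _ => isCompact_Icc (a := -α) (b := α)).of_isClosed_subset
    (isClosed_le (continuous_pnorm hp) continuous_const)
    fun x hx i _ => abs_le.1 ((abs_le_pnorm hp x i).trans hx)

lemma pnorm_fin_two (t : ℝ) (x : Fin 2 → ℝ) :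
    pnorm t x = (|x 0| ^ t + |x 1| ^ t) ^ (1 / t) := by
  simp [pnorm, Fin.sum_univ_two]

lemma euclNorm2_eq_pnorm (v : Fin 2 → ℝ) : euclNorm2 v = pnorm 2 v := by
  simp [pnorm_fin_two, euclNorm2, Real.sqrt_eq_rpow]

end PNorm

lemma _root_.Matrix.IsHermitian.apply_one_zero {A : Matrix (Fin 2) (Fin 2) ℝ}
    (hA : A.IsHermitian) : A 1 0 = A 0 1 := by
  simpa using hA.apply 0 1

-- Only the upper triangle is read: the closed form is meant for symmetric `A`.
noncomputable def eigenvalues₂ (A : Matrix (Fin 2) (Fin 2) ℝ) : Fin 2 → ℝ :=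
  ![(A 0 0 + A 1 1 + √((A 0 0 - A 1 1) ^ 2 + 4 * A 0 1 ^ 2)) / 2,
    (A 0 0 + A 1 1 - √((A 0 0 - A 1 1) ^ 2 + 4 * A 0 1 ^ 2)) / 2]

noncomputable def schattenNorm (t : ℝ) (A : Matrix (Fin 2) (Fin 2) ℝ) : ℝ :=
  pnorm t (eigenvalues₂ A)

lemma eigenvalues₂_add (A : Matrix (Fin 2) (Fin 2) ℝ) :
    eigenvalues₂ A 0 + eigenvalues₂ A 1 = A 0 0 + A 1 1 := by
  simp [eigenvalues₂]; ring

lemma eigenvalues₂_mul (A : Matrix (Fin 2) (Fin 2) ℝ) :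
    eigenvalues₂ A 0 * eigenvalues₂ A 1 = A 0 0 * A 1 1 - A 0 1 ^ 2 := by
  have h := Real.sq_sqrt (by positivity : 0 ≤ (A 0 0 - A 1 1) ^ 2 + 4 * A 0 1 ^ 2)
  simp only [eigenvalues₂, Matrix.cons_val_zero, Matrix.cons_val_one]
  linear_combination (-1 / 4 : ℝ) * h

lemma pnorm_eq_of_add_eq_of_mul_eq {x y : Fin 2 → ℝ} (t : ℝ) (hs : x 0 + x 1 = y 0 + y 1)
    (hm : x 0 * x 1 = y 0 * y 1) : pnorm t x = pnorm t y := by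
  have h : (x 0 - y 0) * (x 0 - y 1) = 0 := by linear_combination x 0 * hs - hm
  rw [pnorm_fin_two, pnorm_fin_two]
  rcases mul_eq_zero.1 h with h | h
  · rw [show x 0 = y 0 by linarith, show x 1 = y 1 by linarith]
  · rw [show x 0 = y 1 by linarith, show x 1 = y 0 by linarith, add_comm]

lemma schattenNorm_eq_pnorm_of_trace_det {A : Matrix (Fin 2) (Fin 2) ℝ} (hA : A.IsHermitian)
    (t : ℝ) {x : Fin 2 → ℝ} (hs : x 0 + x 1 = A.trace) (hd : x 0 * x 1 = A.det) :
    schattenNorm t A = pnorm t x := by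
  refine pnorm_eq_of_add_eq_of_mul_eq t ?_ ?_
  · rw [eigenvalues₂_add, hs, trace_fin_two]
  · rw [eigenvalues₂_mul, hd, det_fin_two, hA.apply_one_zero]; ring

lemma _root_.Matrix.IsHermitian.schattenNorm_eq {A : Matrix (Fin 2) (Fin 2) ℝ}
    (hA : A.IsHermitian) (t : ℝ) : schattenNorm t A = pnorm t hA.eigenvalues :=
  schattenNorm_eq_pnorm_of_trace_det hA t
    (by simp [hA.trace_eq_sum_eigenvalues, Fin.sum_univ_two])
    (by simp [hA.det_eq_prod_eigenvalues, Fin.prod_univ_two])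

lemma schattenNorm_zero {t : ℝ} (ht : t ≠ 0) : schattenNorm t 0 = 0 := by
  simpa [schattenNorm_eq_pnorm_of_trace_det isHermitian_zero t (x := 0)] using pnorm_zero ht

lemma trace_mul_fin_two {A B : Matrix (Fin 2) (Fin 2) ℝ} (hA : A.IsHermitian)
    (hB : B.IsHermitian) :
    (A * B).trace = A 0 0 * B 0 0 + 2 * (A 0 1 * B 0 1) + A 1 1 * B 1 1 := by
  simp only [trace_fin_two, mul_apply, Fin.sum_univ_two, hA.apply_one_zero, hB.apply_one_zero]
  ring

lemma trace_mul_le_dotProduct_eigenvalues₂ {A B : Matrix (Fin 2) (Fin 2) ℝ} (hA : A.IsHermitian)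
    (hB : B.IsHermitian) : (A * B).trace ≤ eigenvalues₂ A ⬝ᵥ eigenvalues₂ B := by
  -- Cauchy–Schwarz for the vectors `(M 0 0 - M 1 1, 2 * M 0 1)` of `M = A, B`, whose norms are
  -- the eigenvalue gaps
  have hcs := dotProduct_le_pnorm_mul_pnorm Real.HolderConjugate.two_two
    ![A 0 0 - A 1 1, 2 * A 0 1] ![B 0 0 - B 1 1, 2 * B 0 1]
  have hdisc : ∀ M : Matrix (Fin 2) (Fin 2) ℝ, pnorm 2 ![M 0 0 - M 1 1, 2 * M 0 1] =
      √((M 0 0 - M 1 1) ^ 2 + 4 * M 0 1 ^ 2) := fun M => by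
    rw [← euclNorm2_eq_pnorm, euclNorm2]
    simp only [cons_val_zero, cons_val_one, cons_val_fin_one]
    ring_nf
  rw [hdisc, hdisc] at hcs
  simp only [dotProduct, Fin.sum_univ_two, eigenvalues₂, Matrix.cons_val_zero,
    Matrix.cons_val_one] at hcs ⊢
  rw [trace_mul_fin_two hA hB]
  nlinarith [hcs]

lemma trace_mul_le_schattenNorm_mul {p q : ℝ} (hpq : p.HolderConjugate q)
    {A B : Matrix (Fin 2) (Fin 2) ℝ} (hA : A.IsHermitian) (hB : B.IsHermitian) :
    (A * B).trace ≤ schattenNorm p A * schattenNorm q B :=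
  (trace_mul_le_dotProduct_eigenvalues₂ hA hB).trans (dotProduct_le_pnorm_mul_pnorm hpq _ _)

lemma exists_schattenNorm_le_trace_mul_eq {p q α : ℝ} (hpq : p.HolderConjugate q) (hα : 0 ≤ α)
    {A : Matrix (Fin 2) (Fin 2) ℝ} (hA : A.IsHermitian) :
    ∃ B : Matrix (Fin 2) (Fin 2) ℝ, B.IsHermitian ∧ schattenNorm q B ≤ α ∧
      (B * A).trace = α * schattenNorm p A := by
  set e := eigenvalues₂ A
  have hsum : e 0 + e 1 = A 0 0 + A 1 1 := eigenvalues₂_add A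
  have hprod : e 0 * e 1 = A 0 0 * A 1 1 - A 0 1 ^ 2 := eigenvalues₂_mul A
  obtain ⟨μ, hμ, hμe⟩ := exists_pnorm_le_dotProduct_eq hpq hα e
  rw [schattenNorm, ← hμe, dotProduct, Fin.sum_univ_two]
  by_cases he : e 0 = e 1
  · -- `A` is scalar, and `diagonal μ` has eigenvalues `μ`
    have hdisc : (A 0 0 - A 1 1) ^ 2 + 4 * A 0 1 ^ 2 = 0 := by
      linear_combination (-(e 0 + e 1 + A 0 0 + A 1 1)) * hsum + 4 * hprod + (e 0 - e 1) * he
    have hA01 : A 0 1 = 0 := by nlinarith [sq_nonneg (A 0 0 - A 1 1), sq_nonneg (A 0 1)]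
    have hA00 : A 0 0 = A 1 1 := by nlinarith [sq_nonneg (A 0 0 - A 1 1), sq_nonneg (A 0 1)]
    refine ⟨diagonal μ, isHermitian_diagonal μ, ?_, ?_⟩
    · rwa [schattenNorm_eq_pnorm_of_trace_det (isHermitian_diagonal μ) q (x := μ)
        (by simp) (by simp)]
    · rw [trace_mul_fin_two (isHermitian_diagonal μ) hA, show e 0 = A 0 0 by linarith,
        show e 1 = A 1 1 by linarith]
      simp [mul_comm]
  · -- otherwise the affine function `a + β A` of `A` moves its eigenvalues `e` onto `μ`
    set β := (μ 0 - μ 1) / (e 0 - e 1)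
    set a := μ 1 - β * e 1
    have h0 : a + β * e 0 = μ 0 := by
      simp only [a, β]; field_simp [sub_ne_zero.2 he]; ring
    have h1 : a + β * e 1 = μ 1 := by simp only [a]; ring
    set B := a • 1 + β • A
    have hB : B.IsHermitian :=
      (isHermitian_one.smul (IsSelfAdjoint.all a)).add (hA.smul (IsSelfAdjoint.all β))
    have hB00 : B 0 0 = a + β * A 0 0 := by simp [B]
    have hB01 : B 0 1 = β * A 0 1 := by simp [B]
    have hB10 : B 1 0 = β * A 0 1 := by simp [B, hA.apply_one_zero]
    have hB11 : B 1 1 = a + β * A 1 1 := by simp [B]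
    refine ⟨B, hB, ?_, ?_⟩
    · rwa [schattenNorm_eq_pnorm_of_trace_det hB q (x := μ)]
      · rw [trace_fin_two, hB00, hB11, ← h0, ← h1]
        linear_combination β * hsum
      · rw [det_fin_two, hB00, hB01, hB10, hB11, ← h0, ← h1]
        linear_combination (a * β) * hsum + β ^ 2 * hprod
    · rw [trace_mul_fin_two hB hA, hB00, hB01, hB11, ← h0, ← h1]
      linear_combination (-(a + β * (e 0 + e 1 + A 0 0 + A 1 1))) * hsum + 2 * β * hprod

lemma schattenNorm_le_iff {p q α : ℝ} (hpq : p.HolderConjugate q)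
    {A : Matrix (Fin 2) (Fin 2) ℝ} (hA : A.IsHermitian) :
    schattenNorm q A ≤ α ↔
      ∀ B : Matrix (Fin 2) (Fin 2) ℝ, B.IsHermitian → schattenNorm p B ≤ 1 →
        (B * A).trace ≤ α := by
  refine ⟨fun h B hB hB1 => ?_, fun h => ?_⟩
  · calc (B * A).trace ≤ schattenNorm p B * schattenNorm q A :=
          trace_mul_le_schattenNorm_mul hpq hB hA
      _ ≤ 1 * α := mul_le_mul hB1 h (pnorm_nonneg _ _) zero_le_one
      _ = α := one_mul α
  · obtain ⟨B, hB, hB1, hBA⟩ := exists_schattenNorm_le_trace_mul_eq hpq.symm zero_le_one hA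
    rw [one_mul] at hBA
    exact hBA ▸ h B hB hB1

def schattenBall (q α : ℝ) : Set (Matrix (Fin 2) (Fin 2) ℝ) :=
  {A | A.IsHermitian ∧ schattenNorm q A ≤ α}

lemma convex_schattenBall {p q : ℝ} (hpq : p.HolderConjugate q) (α : ℝ) :
    Convex ℝ (schattenBall q α) := by
  rintro A ⟨hA, hAα⟩ B ⟨hB, hBα⟩ a b ha hb hab
  have hAB : (a • A + b • B).IsHermitian :=
    (hA.smul (IsSelfAdjoint.all a)).add (hB.smul (IsSelfAdjoint.all b))
  refine ⟨hAB, (schattenNorm_le_iff hpq hAB).2 fun M hM hM1 => ?_⟩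
  calc (M * (a • A + b • B)).trace = a * (M * A).trace + b * (M * B).trace := by
        simp [Matrix.mul_add, trace_add, trace_smul]
    _ ≤ a * α + b * α := by
        gcongr
        · exact (schattenNorm_le_iff hpq hA).1 hAα M hM hM1
        · exact (schattenNorm_le_iff hpq hB).1 hBα M hM hM1
    _ = α := by rw [← add_mul, hab, one_mul]

lemma continuous_schattenNorm {t : ℝ} (ht : 0 < t) : Continuous (schattenNorm t) := by
  refine (continuous_pnorm ht).comp ?_
  unfold eigenvalues₂
  fun_prop

lemma isCompact_schattenBall {q : ℝ} (hq : 0 < q) (α : ℝ) : IsCompact (schattenBall q α) := by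
  have hclosed : IsClosed (schattenBall q α) :=
    (isClosed_eq continuous_id.matrix_conjTranspose continuous_id).inter
      (isClosed_le (continuous_schattenNorm hq) continuous_const)
  refine (isCompact_univ_pi fun _ => isCompact_univ_pi fun _ =>
    isCompact_Icc (a := -(2 * α)) (b := 2 * α)).of_isClosed_subset hclosed ?_
  rintro A ⟨hA, hAα⟩ i - j -
  have he : ∀ k, |eigenvalues₂ A k| ≤ α := fun k => (abs_le_pnorm hq _ k).trans hAα
  have hα : 0 ≤ α := (abs_nonneg _).trans (he 0)
  have hsq : ∀ k, eigenvalues₂ A k ^ 2 ≤ α ^ 2 := fun k =>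
    sq_le_sq' (abs_le.1 (he k)).1 (abs_le.1 (he k)).2
  have hentries : A 0 0 ^ 2 + 2 * A 0 1 ^ 2 + A 1 1 ^ 2 =
      eigenvalues₂ A 0 ^ 2 + eigenvalues₂ A 1 ^ 2 := by
    linear_combination (-(eigenvalues₂ A 0 + eigenvalues₂ A 1 + A 0 0 + A 1 1)) *
      eigenvalues₂_add A + 2 * eigenvalues₂_mul A
  have hij : A i j ^ 2 ≤ (2 * α) ^ 2 := by
    fin_cases i <;> fin_cases j <;> simp only [Fin.zero_eta, Fin.mk_one, hA.apply_one_zero] <;>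
      nlinarith [hsq 0, hsq 1, sq_nonneg (A 0 0), sq_nonneg (A 0 1), sq_nonneg (A 1 1)]
  exact abs_le.1 (abs_le_of_sq_le_sq hij (by positivity))

theorem exists_forall_add_dotProduct_lt_of_isCompact {E ι : Type*} [AddCommGroup E] [Module ℝ E]
    [TopologicalSpace E] [Fintype ι] {K : Set E} (hKc : IsCompact K) (hK : Convex ℝ K)
    (A : E →L[ℝ] ι → ℝ) (b : E →L[ℝ] ℝ) {c : ℝ} (hfeas : ∃ z ∈ K, A z = 0)
    (hc : ∀ z ∈ K, A z = 0 → b z < c) :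
    ∃ w : ι → ℝ, ∀ z ∈ K, b z + w ⬝ᵥ A z < c := by
  classical
  have hnot : ((0 : ι → ℝ), c) ∉ A.prod b '' K := by
    rintro ⟨z, hz, hzc⟩
    obtain ⟨hAz, hbz⟩ := Prod.ext_iff.1 hzc
    exact (hc z hz hAz).ne hbz
  obtain ⟨f, s, hfc, hfK⟩ := geometric_hahn_banach_point_closed
    (hK.linear_image (A.prod b).toLinearMap) (hKc.image (A.prod b).continuous).isClosed hnot
  have hfK' : ∀ z ∈ K, s < f (A z, b z) := fun z hz => hfK _ ⟨z, hz, rfl⟩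
  set w : ι → ℝ := fun i => f (fun j => if i = j then 1 else 0, 0)
  set s₀ := f (0, 1)
  have hf : ∀ y t, f (y, t) = w ⬝ᵥ y + t * s₀ := fun y t => by
    have hy :=
      (f.comp (ContinuousLinearMap.inl ℝ (ι → ℝ) ℝ) : (ι → ℝ) →ₗ[ℝ] ℝ).pi_apply_eq_sum_univ y
    have hsplit : ((y, t) : (ι → ℝ) × ℝ) = (y, 0) + t • (0, 1) := by simp
    rw [hsplit, map_add, map_smul, smul_eq_mul]
    simp only [ContinuousLinearMap.coe_coe, ContinuousLinearMap.comp_apply,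
      ContinuousLinearMap.inl_apply, smul_eq_mul] at hy
    simp [hy, dotProduct, w, s₀, mul_comm]
  -- the separating functional decreases in the value direction, as feasible values lie below `c`
  have hs₀ : s₀ < 0 := by
    obtain ⟨z₀, hz₀, hAz₀⟩ := hfeas
    have h₀ := hfK' z₀ hz₀
    rw [hAz₀, hf, dotProduct_zero, zero_add] at h₀
    rw [hf, dotProduct_zero, zero_add] at hfc
    nlinarith [hc z₀ hz₀ hAz₀]
  refine ⟨fun i => w i / s₀, fun z hz => ?_⟩
  have hz' := hfK' z hz
  rw [hf] at hz'
  rw [hf, dotProduct_zero, zero_add] at hfc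
  have hdiv : (fun i => w i / s₀) ⬝ᵥ A z = w ⬝ᵥ A z / s₀ := by
    simp [dotProduct, div_mul_eq_mul_div, Finset.sum_div]
  have key : w ⬝ᵥ A z / s₀ < c - b z := by
    rw [div_lt_iff_of_neg hs₀]
    nlinarith
  rw [hdiv]
  linarith

lemma conv_left_comm (f h g : G → ℝ) : conv f (conv h g) = conv h (conv f g) := by
  funext r
  simp only [conv, Finset.mul_sum]
  rw [Finset.sum_comm]
  refine Finset.sum_congr rfl fun t _ => Finset.sum_congr rfl fun s _ => ?_
  rw [sub_right_comm]
  ring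

lemma sum_conv_mul (a u m : G → ℝ) :
    ∑ r, conv a u r * m r = ∑ r, u r * conv m (flipF a) r := by
  have lhs : ∑ r, conv a u r * m r = ∑ s, ∑ t, a s * u t * m (t + s) := by
    simp only [conv, Finset.sum_mul]
    rw [Finset.sum_comm]
    refine Finset.sum_congr rfl fun s _ => ?_
    rw [← Equiv.sum_comp (Equiv.addRight s)]
    simp
  have rhs : ∑ t, u t * conv m (flipF a) t = ∑ t, ∑ s, a s * u t * m (t + s) := by
    simp only [conv, flipF, Finset.mul_sum]
    refine Finset.sum_congr rfl fun t _ => ?_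
    rw [← Equiv.sum_comp (Equiv.addLeft t)]
    simp only [Equiv.coe_addLeft, sub_add_cancel_left, neg_neg]
    exact Finset.sum_congr rfl fun s _ => by ring
  rw [lhs, rhs, Finset.sum_comm]

lemma sum_trace_mul_symJac (d₁ d₂ : G → ℝ) {N : G → Matrix (Fin 2) (Fin 2) ℝ}
    (hN : ∀ r, (N r).IsHermitian) (u : G → Fin 2 → ℝ) :
    ∑ r, (N r * symJac d₁ d₂ u r).trace = ∑ r, u r ⬝ᵥ divN d₁ d₂ N r := by
  have hN10 : (fun s => N s 1 0) = fun s => N s 0 1 := funext fun s => (hN s).apply_one_zero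
  calc ∑ r, (N r * symJac d₁ d₂ u r).trace
      = ∑ r, (conv d₁ (fun s => u s 0) r * N r 0 0 + conv d₂ (fun s => u s 0) r * N r 0 1 +
          conv d₁ (fun s => u s 1) r * N r 0 1 + conv d₂ (fun s => u s 1) r * N r 1 1) := by
        refine Finset.sum_congr rfl fun r _ => ?_
        rw [trace_mul_fin_two (hN r) (symJac_isHermitian d₁ d₂ u r)]
        simp only [symJac, add_self_div_two, of_apply, cons_val', cons_val_zero, cons_val_one,
          cons_val_fin_one]
        ring
    _ = ∑ r, u r ⬝ᵥ divN d₁ d₂ N r := by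
        simp only [Finset.sum_add_distrib, sum_conv_mul]
        simp only [divN, hN10, dotProduct, Fin.sum_univ_two, mul_add, Finset.sum_add_distrib]
        ring

lemma divN_zero (d₁ d₂ : G → ℝ) : divN d₁ d₂ 0 = 0 := by
  funext r i
  simp [divN, conv]

lemma symJac_grad (d₁ d₂ g : G → ℝ) : symJac d₁ d₂ (grad d₁ d₂ g) = hess d₁ d₂ g := by
  funext r
  ext i j
  fin_cases i <;> fin_cases j <;> simp [symJac, grad, hess, conv_left_comm d₂ d₁ g]

section Duality

variable (d₁ d₂ g : G → ℝ)

noncomputable def primalObjective (αf αs p : ℝ) (u : G → Fin 2 → ℝ) : ℝ :=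
  αf * ∑ r, pnorm 2 (grad d₁ d₂ g r - u r) + αs * ∑ r, schattenNorm p (symJac d₁ d₂ u r)

def dualFeasible (αf αs q : ℝ) : Set (G → Matrix (Fin 2) (Fin 2) ℝ) :=
  {N | ∀ r, N r ∈ schattenBall q αs ∧ pnorm 2 (divN d₁ d₂ N r) ≤ αf}

noncomputable def dualObjective (N : G → Matrix (Fin 2) (Fin 2) ℝ) : ℝ :=
  ∑ r, (N r * hess d₁ d₂ g r).trace

-- Pairs `(v, N)` of the dual problem with its constraint `v = N⋆d̃` relaxed.
def dualBall (αf αs q : ℝ) : Set (G → (Fin 2 → ℝ) × Matrix (Fin 2) (Fin 2) ℝ) :=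
  Set.univ.pi fun _ => {v | pnorm 2 v ≤ αf} ×ˢ schattenBall q αs

noncomputable def lagrangian (z : G → (Fin 2 → ℝ) × Matrix (Fin 2) (Fin 2) ℝ)
    (u : G → Fin 2 → ℝ) : ℝ :=
  ∑ r, ((grad d₁ d₂ g r - u r) ⬝ᵥ (z r).1 + ((z r).2 * symJac d₁ d₂ u r).trace)

noncomputable def constraintMap :
    (G → (Fin 2 → ℝ) × Matrix (Fin 2) (Fin 2) ℝ) →ₗ[ℝ] G × Fin 2 → ℝ where
  toFun z j := divN d₁ d₂ (fun s => (z s).2) j.1 j.2 - (z j.1).1 j.2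
  map_add' z z' := by
    funext j
    simp only [divN, conv, Pi.add_apply, Prod.fst_add, Prod.snd_add, Matrix.add_apply, add_mul,
      Finset.sum_add_distrib]
    ring
  map_smul' k z := by
    funext j
    simp only [divN, conv, Pi.smul_apply, Prod.smul_fst, Prod.smul_snd, Matrix.smul_apply,
      smul_eq_mul, RingHom.id_apply]
    rw [mul_sub, mul_add, Finset.mul_sum, Finset.mul_sum]
    simp only [mul_assoc]

noncomputable def valueMap : (G → (Fin 2 → ℝ) × Matrix (Fin 2) (Fin 2) ℝ) →ₗ[ℝ] ℝ where
  toFun z := ∑ r, grad d₁ d₂ g r ⬝ᵥ (z r).1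
  map_add' z z' := by simp [dotProduct_add, Finset.sum_add_distrib]
  map_smul' k z := by simp [dotProduct_smul, Finset.mul_sum]

variable {d₁ d₂ g}

lemma lagrangian_le_primalObjective {αf αs p q : ℝ} (hpq : p.HolderConjugate q)
    {z : G → (Fin 2 → ℝ) × Matrix (Fin 2) (Fin 2) ℝ} (hz : z ∈ dualBall αf αs q)
    (u : G → Fin 2 → ℝ) : lagrangian d₁ d₂ g z u ≤ primalObjective d₁ d₂ g αf αs p u := by
  rw [lagrangian, primalObjective, Finset.mul_sum, Finset.mul_sum, ← Finset.sum_add_distrib]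
  refine Finset.sum_le_sum fun r _ => add_le_add ?_ ?_
  · obtain ⟨hv, -⟩ := hz r (Set.mem_univ r)
    calc (grad d₁ d₂ g r - u r) ⬝ᵥ (z r).1 ≤ pnorm 2 (grad d₁ d₂ g r - u r) * pnorm 2 (z r).1 :=
          dotProduct_le_pnorm_mul_pnorm .two_two _ _
      _ ≤ αf * pnorm 2 (grad d₁ d₂ g r - u r) := by
          rw [mul_comm]; exact mul_le_mul_of_nonneg_right hv (pnorm_nonneg _ _)
  · obtain ⟨-, hN, hNα⟩ := hz r (Set.mem_univ r)
    calc ((z r).2 * symJac d₁ d₂ u r).trace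
        ≤ schattenNorm q (z r).2 * schattenNorm p (symJac d₁ d₂ u r) :=
          trace_mul_le_schattenNorm_mul hpq.symm hN (symJac_isHermitian d₁ d₂ u r)
      _ ≤ αs * schattenNorm p (symJac d₁ d₂ u r) :=
          mul_le_mul_of_nonneg_right hNα (pnorm_nonneg _ _)

lemma exists_lagrangian_eq_primalObjective {αf αs p q : ℝ} (hpq : p.HolderConjugate q)
    (hαf : 0 ≤ αf) (hαs : 0 ≤ αs) (u : G → Fin 2 → ℝ) :
    ∃ z ∈ dualBall αf αs q, lagrangian d₁ d₂ g z u = primalObjective d₁ d₂ g αf αs p u := by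
  choose v hv hvu using fun r =>
    exists_pnorm_le_dotProduct_eq .two_two hαf (grad d₁ d₂ g r - u r)
  choose N hN hNα hNu using fun r =>
    exists_schattenNorm_le_trace_mul_eq hpq hαs (symJac_isHermitian d₁ d₂ u r)
  refine ⟨fun r => (v r, N r), fun r _ => ⟨hv r, hN r, hNα r⟩, ?_⟩
  simp only [lagrangian, primalObjective, hvu, hNu, Finset.sum_add_distrib, Finset.mul_sum]

lemma lagrangian_eq_valueMap_add {z : G → (Fin 2 → ℝ) × Matrix (Fin 2) (Fin 2) ℝ}
    (hz : ∀ r, (z r).2.IsHermitian) (u : G → Fin 2 → ℝ) :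
    lagrangian d₁ d₂ g z u =
      valueMap d₁ d₂ g z + (fun j => u j.1 j.2) ⬝ᵥ constraintMap d₁ d₂ z := by
  simp only [lagrangian, Finset.sum_add_distrib, sum_trace_mul_symJac d₁ d₂ hz, valueMap,
    constraintMap, LinearMap.coe_mk, AddHom.coe_mk]
  simp only [dotProduct, Fintype.sum_prod_type, ← Finset.sum_add_distrib, Fin.sum_univ_two]
  exact Finset.sum_congr rfl fun r _ => by simp only [Pi.sub_apply]; ring

lemma dualObjective_eq {N : G → Matrix (Fin 2) (Fin 2) ℝ} (hN : ∀ r, (N r).IsHermitian) :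
    dualObjective d₁ d₂ g N = ∑ r, grad d₁ d₂ g r ⬝ᵥ divN d₁ d₂ N r := by
  rw [dualObjective, ← symJac_grad, sum_trace_mul_symJac d₁ d₂ hN]

lemma dualObjective_le_primalObjective {αf αs p q : ℝ} (hpq : p.HolderConjugate q)
    {N : G → Matrix (Fin 2) (Fin 2) ℝ} (hN : N ∈ dualFeasible d₁ d₂ αf αs q)
    (u : G → Fin 2 → ℝ) : dualObjective d₁ d₂ g N ≤ primalObjective d₁ d₂ g αf αs p u := by
  set z : G → (Fin 2 → ℝ) × Matrix (Fin 2) (Fin 2) ℝ := fun r => (divN d₁ d₂ N r, N r)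
  have hz : z ∈ dualBall αf αs q := fun r _ => ⟨(hN r).2, (hN r).1⟩
  have hAz : constraintMap d₁ d₂ z = 0 := by
    funext j; simp [constraintMap, z]
  calc dualObjective d₁ d₂ g N = lagrangian d₁ d₂ g z u := by
        rw [lagrangian_eq_valueMap_add (fun r => (hN r).1.1), hAz, dotProduct_zero, add_zero,
          dualObjective_eq fun r => (hN r).1.1]
        rfl
    _ ≤ primalObjective d₁ d₂ g αf αs p u := lagrangian_le_primalObjective hpq hz u

lemma exists_primalObjective_lt {αf αs p q : ℝ} (hpq : p.HolderConjugate q) (hαf : 0 ≤ αf)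
    (hαs : 0 ≤ αs) {c : ℝ} (hc : ∀ N ∈ dualFeasible d₁ d₂ αf αs q, dualObjective d₁ d₂ g N < c) :
    ∃ u, primalObjective d₁ d₂ g αf αs p u < c := by
  have hK : IsCompact (dualBall (G := G) αf αs q) :=
    isCompact_univ_pi fun _ => (isCompact_pnorm_le two_pos αf).prod
      (isCompact_schattenBall hpq.symm.pos αs)
  have hKc : Convex ℝ (dualBall (G := G) αf αs q) :=
    convex_pi fun _ _ => (convex_pnorm_le .two_two αf).prod (convex_schattenBall hpq αs)
  have h0 : (0 : G → (Fin 2 → ℝ) × Matrix (Fin 2) (Fin 2) ℝ) ∈ dualBall αf αs q :=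
    fun _ _ => ⟨by simpa [pnorm_zero two_ne_zero] using hαf, isHermitian_zero,
      by simpa [schattenNorm_zero hpq.symm.ne_zero] using hαs⟩
  have hfeas : ∀ z ∈ dualBall αf αs q, constraintMap d₁ d₂ z = 0 →
      valueMap d₁ d₂ g z < c := by
    intro z hz hAz
    have hv : ∀ r, (z r).1 = divN d₁ d₂ (fun s => (z s).2) r := fun r => by
      funext i
      have h := congrFun hAz (r, i)
      simp only [constraintMap, LinearMap.coe_mk, AddHom.coe_mk, Pi.zero_apply, sub_eq_zero] at h
      exact h.symm
    have hN : (fun s => (z s).2) ∈ dualFeasible d₁ d₂ αf αs q := fun r =>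
      ⟨(hz r (Set.mem_univ r)).2, hv r ▸ (hz r (Set.mem_univ r)).1⟩
    convert hc _ hN using 1
    rw [dualObjective_eq fun r => (hN r).1.1]
    exact Finset.sum_congr rfl fun r _ => by rw [← hv r]
  obtain ⟨w, hw⟩ := exists_forall_add_dotProduct_lt_of_isCompact hK hKc
    (constraintMap d₁ d₂).toContinuousLinearMap (valueMap d₁ d₂ g).toContinuousLinearMap
    ⟨0, h0, map_zero _⟩ hfeas
  obtain ⟨z, hz, hzu⟩ := exists_lagrangian_eq_primalObjective (g := g) hpq hαf hαs
    fun r i => w (r, i)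
  refine ⟨fun r i => w (r, i), ?_⟩
  rw [← hzu, lagrangian_eq_valueMap_add fun r => (hz r (Set.mem_univ r)).2.1]
  exact hw z hz

theorem sInf_primalObjective_eq_sSup_dualObjective {αf αs p q : ℝ} (hpq : p.HolderConjugate q)
    (hαf : 0 ≤ αf) (hαs : 0 ≤ αs) :
    sInf (Set.range (primalObjective d₁ d₂ g αf αs p)) =
      sSup (dualObjective d₁ d₂ g '' dualFeasible d₁ d₂ αf αs q) := by
  have h0 : (0 : G → Matrix (Fin 2) (Fin 2) ℝ) ∈ dualFeasible d₁ d₂ αf αs q := fun r =>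
    ⟨⟨isHermitian_zero, by simpa [schattenNorm_zero hpq.symm.ne_zero] using hαs⟩,
      by simpa [divN_zero, pnorm_zero two_ne_zero] using hαf⟩
  have hweak : ∀ N ∈ dualFeasible d₁ d₂ αf αs q, ∀ u,
      dualObjective d₁ d₂ g N ≤ primalObjective d₁ d₂ g αf αs p u :=
    fun N hN u => dualObjective_le_primalObjective hpq hN u
  have hbdd : BddAbove (dualObjective d₁ d₂ g '' dualFeasible d₁ d₂ αf αs q) :=
    ⟨primalObjective d₁ d₂ g αf αs p 0, by rintro _ ⟨N, hN, rfl⟩; exact hweak N hN 0⟩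
  have hbdd' : BddBelow (Set.range (primalObjective d₁ d₂ g αf αs p)) :=
    ⟨dualObjective d₁ d₂ g 0, by rintro _ ⟨u, rfl⟩; exact hweak 0 h0 u⟩
  refine le_antisymm (le_of_forall_gt_imp_ge_of_dense fun c hc => ?_) ?_
  · obtain ⟨u, hu⟩ := exists_primalObjective_lt hpq hαf hαs fun N hN =>
      (le_csSup hbdd ⟨N, hN, rfl⟩).trans_lt hc
    exact (csInf_le hbdd' ⟨u, rfl⟩).trans hu.le
  · refine csSup_le ⟨_, ⟨0, h0, rfl⟩⟩ ?_
    rintro _ ⟨N, hN, rfl⟩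
    exact le_csInf (Set.range_nonempty _) (by rintro _ ⟨u, rfl⟩; exact hweak N hN u)

end Duality

theorem ghs_duality_general
    (d₁ d₂ g : G → ℝ) (αf αs p q : ℝ)
    (hαf : 0 < αf) (hαs : 0 < αs) (hp : 1 < p) (hpq : 1 / p + 1 / q = 1) :
    sInf {x : ℝ | ∃ u : G → Fin 2 → ℝ,
        x = αf * ∑ r : G, euclNorm2 (fun i => grad d₁ d₂ g r i - u r i) +
            αs * ∑ r : G,
              (|(symJac_isHermitian d₁ d₂ u r).eigenvalues 0| ^ p +
               |(symJac_isHermitian d₁ d₂ u r).eigenvalues 1| ^ p) ^ (1 / p)} =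
    sSup {x : ℝ | ∃ (N : G → Matrix (Fin 2) (Fin 2) ℝ) (hN : ∀ r, (N r).IsHermitian),
        (∀ r : G, (|(hN r).eigenvalues 0| ^ q + |(hN r).eigenvalues 1| ^ q) ^ (1 / q) ≤ αs) ∧
        (∀ r : G, euclNorm2 (divN d₁ d₂ N r) ≤ αf) ∧
        x = ∑ r : G, (N r * hess d₁ d₂ g r).trace} := by
  have hpq' : p.HolderConjugate q :=
    Real.holderConjugate_iff.2 ⟨hp, by simpa only [one_div] using hpq⟩
  convert sInf_primalObjective_eq_sSup_dualObjective (d₁ := d₁) (d₂ := d₂) (g := g) hpq'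
    hαf.le hαs.le using 2
  · ext x
    simp only [Set.mem_ofPred_eq, Set.mem_range, eq_comm (a := x), primalObjective,
      euclNorm2_eq_pnorm, fun u r => (symJac_isHermitian d₁ d₂ u r).schattenNorm_eq p,
      pnorm_fin_two]
    rfl
  · ext x
    simp only [Set.mem_ofPred_eq, Set.mem_image, dualFeasible, schattenBall, euclNorm2_eq_pnorm]
    constructor
    · rintro ⟨N, hN, hNα, hNf, rfl⟩
      refine ⟨N, fun r => ⟨⟨hN r, ?_⟩, hNf r⟩, rfl⟩
      rw [(hN r).schattenNorm_eq, pnorm_fin_two]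
      exact hNα r
    · rintro ⟨N, hN, rfl⟩
      refine ⟨N, fun r => (hN r).1.1, fun r => ?_, fun r => (hN r).2, rfl⟩
      rw [← pnorm_fin_two, ← (hN r).1.1.schattenNorm_eq]
      exact (hN r).1.2

/-- Proposition 1 of the paper for exponents `1 < p < ∞`: the minimization form
of the generalized Hessian-Schatten norm equals its dual (maximization) form. -/
theorem ghs_duality
    (d₁ d₂ g : G → ℝ) (αf αs p q : ℝ)
    (hαf : 0 < αf) (hαs : 0 < αs) (hp : 1 < p) (hq : 1 < q) (hpq : 1 / p + 1 / q = 1) :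
    sInf {x : ℝ | ∃ u : G → Fin 2 → ℝ,
        x = αf * ∑ r : G, euclNorm2 (fun i => grad d₁ d₂ g r i - u r i) +
            αs * ∑ r : G,
              (|(symJac_isHermitian d₁ d₂ u r).eigenvalues 0| ^ p +
               |(symJac_isHermitian d₁ d₂ u r).eigenvalues 1| ^ p) ^ (1 / p)} =
    sSup {x : ℝ | ∃ (N : G → Matrix (Fin 2) (Fin 2) ℝ) (hN : ∀ r, (N r).IsHermitian),
        (∀ r : G, (|(hN r).eigenvalues 0| ^ q + |(hN r).eigenvalues 1| ^ q) ^ (1 / q) ≤ αs) ∧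
        (∀ r : G, euclNorm2 (divN d₁ d₂ N r) ≤ αf) ∧
        x = ∑ r : G, (N r * hess d₁ d₂ g r).trace} :=
  ghs_duality_general d₁ d₂ g αf αs p q hαf hαs hp hpq

end GHSN
end

section
/- Let G be a finite additive abelian group, let M : G → Sym₂(ℝ) be a symmetric-matrix image, let α_s > 0, and let p, q ∈ (1, ∞) satisfy 1/p + 1/q = 1. Then the supremum of Σ_{r∈G} trace(N(r)·M(r)) over all symmetric-matrix images N : G → Sym₂(ℝ) satisfying ‖N(r)‖_{S(q)} ≤ α_s for every r ∈ G equals α_s·Σ_{r∈G} ‖M(r)‖_{S(p)}, and this supremum is attained. -/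
open Finset

/-!
For each `r` this is the duality between the Schatten `p`- and `q`-norms of real symmetric
matrices. Writing `A = U diag(a) Uᵀ` and `B = V diag(b) Vᵀ`, one has
`tr (A B) = ∑ i j, W i j ^ 2 * a i * b j` with `W = Uᵀ V` orthogonal. The weights `W i j ^ 2`
form a doubly stochastic matrix, so Hölder's inequality with these weights bounds `tr (A B)` by
`‖a‖_p ‖b‖_q`. Equality is attained by `N = U diag(d) Uᵀ`, where `d` is the extremal vector of
Hölder's inequality for `a`. Summing over `r` gives the mixed-norm identity.
-/

theorem Real.inner_le_weighted_Lp_mul_Lq {ι : Type*} (s : Finset ι) {p q : ℝ}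
    (hpq : p.HolderConjugate q) (w f g : ι → ℝ) (hw : ∀ i ∈ s, 0 ≤ w i) :
    ∑ i ∈ s, w i * (f i * g i) ≤
      (∑ i ∈ s, w i * |f i| ^ p) ^ (1 / p) * (∑ i ∈ s, w i * |g i| ^ q) ^ (1 / q) := by
  have hpow {r : ℝ} (hr : r ≠ 0) (h : ι → ℝ) (i) (hi : i ∈ s) :
      |w i ^ r⁻¹ * h i| ^ r = w i * |h i| ^ r := by
    rw [abs_mul, abs_of_nonneg (Real.rpow_nonneg (hw i hi) _),
      Real.mul_rpow (Real.rpow_nonneg (hw i hi) _) (abs_nonneg _),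
      Real.rpow_inv_rpow (hw i hi) hr]
  calc ∑ i ∈ s, w i * (f i * g i)
      = ∑ i ∈ s, (w i ^ p⁻¹ * f i) * (w i ^ q⁻¹ * g i) := by
        refine sum_congr rfl fun i hi => ?_
        rw [mul_mul_mul_comm, ← Real.rpow_add' (hw i hi) (by simp [hpq.inv_add_inv_eq_one]),
          hpq.inv_add_inv_eq_one, Real.rpow_one]
    _ ≤ _ := Real.inner_le_Lp_mul_Lq s _ _ hpq
    _ = _ := by
        rw [sum_congr rfl (hpow hpq.ne_zero f), sum_congr rfl (hpow hpq.symm.ne_zero g)]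

theorem Real.exists_Lq_le_and_inner_eq_mul_Lp {ι : Type*} (s : Finset ι) {p q : ℝ}
    (hpq : p.HolderConjugate q) (a : ι → ℝ) {α : ℝ} (hα : 0 ≤ α) :
    ∃ d : ι → ℝ, (∑ i ∈ s, |d i| ^ q) ^ (1 / q) ≤ α ∧
      ∑ i ∈ s, d i * a i = α * (∑ i ∈ s, |a i| ^ p) ^ (1 / p) := by
  have hS : 0 ≤ ∑ i ∈ s, |a i| ^ p := sum_nonneg fun i _ => by positivity
  set c := (∑ i ∈ s, |a i| ^ p) ^ (1 / p) with hc_def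
  rcases (show 0 ≤ c from Real.rpow_nonneg hS _).eq_or_lt with hc | hc
  · refine ⟨0, ?_, ?_⟩
    · simp [Real.zero_rpow, hpq.symm.ne_zero, hα]
    · simp [← hc]
  -- the equality case of Hölder: `d = α · x |x|^(p-2)` for the unit vector `x = a / ‖a‖_p`
  set x : ι → ℝ := fun i => a i / c
  have hx : ∑ i ∈ s, |x i| ^ p = 1 := by
    have hcp : c ^ p = ∑ i ∈ s, |a i| ^ p := by
      rw [hc_def, one_div, Real.rpow_inv_rpow hS hpq.ne_zero]
    simp only [x, abs_div, abs_of_pos hc, Real.div_rpow (abs_nonneg _) hc.le, ← sum_div, hcp]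
    exact div_self (hcp ▸ (Real.rpow_pos_of_pos hc p).ne')
  have hp1 : 1 < p := hpq.lt
  have habs (t : ℝ) : |t * |t| ^ (p - 2)| = |t| ^ (p - 1) := by
    rw [abs_mul, abs_of_nonneg (Real.rpow_nonneg (abs_nonneg t) _), mul_comm,
      ← Real.rpow_add_one' (abs_nonneg t) (by linarith)]
    ring_nf
  have hmul (t : ℝ) : t * |t| ^ (p - 2) * t = |t| ^ p := by
    calc t * |t| ^ (p - 2) * t = |t| ^ (p - 2) * |t| * |t| := by
          linear_combination (-|t| ^ (p - 2)) * abs_mul_abs_self t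
      _ = |t| ^ p := by
          rw [← Real.rpow_add_one' (abs_nonneg t) (by linarith),
            ← Real.rpow_add_one' (abs_nonneg t) (by linarith)]
          ring_nf
  refine ⟨fun i => α * (x i * |x i| ^ (p - 2)), le_of_eq ?_, ?_⟩
  · have hq : (p - 1) * q = p := hpq.sub_one_mul_conj
    simp only [abs_mul, abs_of_nonneg hα, habs,
      Real.mul_rpow hα (Real.rpow_nonneg (abs_nonneg _) _), ← Real.rpow_mul (abs_nonneg _), hq,
      ← mul_sum, hx, mul_one]
    rw [one_div, Real.rpow_rpow_inv hα hpq.symm.ne_zero]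
  · calc ∑ i ∈ s, α * (x i * |x i| ^ (p - 2)) * a i
        = ∑ i ∈ s, α * c * (x i * |x i| ^ (p - 2) * x i) := by
          refine sum_congr rfl fun i _ => ?_
          simp only [x]
          field_simp
      _ = α * c := by simp only [hmul, ← mul_sum, hx, mul_one]

namespace Matrix

variable {n : Type*} [Fintype n] [DecidableEq n]

theorem trace_mul_mul_star_of_mem_unitaryGroup {U : Matrix n n ℝ} (hU : U ∈ unitaryGroup n ℝ)
    (X : Matrix n n ℝ) :
    (U * X * star U).trace = X.trace := by
  rw [trace_mul_cycle, (mem_unitaryGroup_iff'.mp hU), one_mul]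

theorem trace_diagonal_mul_mul_diagonal_mul_star (a b : n → ℝ) (W : Matrix n n ℝ) :
    (diagonal a * W * diagonal b * star W).trace = ∑ i, ∑ j, W i j ^ 2 * (a i * b j) := by
  simp only [trace, diag, mul_apply, diagonal_apply, star_apply, star_trivial, ite_mul, zero_mul,
    mul_ite, mul_zero, sum_ite_eq, sum_ite_eq', mem_univ, if_true]
  refine sum_congr rfl fun i _ => sum_congr rfl fun j _ => by ring

theorem sum_row_sq_eq_one_of_mem_unitaryGroup {W : Matrix n n ℝ} (hW : W ∈ unitaryGroup n ℝ)
    (i : n) :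
    ∑ j, W i j ^ 2 = 1 := by
  have := congrFun (congrFun (mem_unitaryGroup_iff.mp hW) i) i
  simpa [mul_apply, sq] using this

theorem sum_col_sq_eq_one_of_mem_unitaryGroup {W : Matrix n n ℝ} (hW : W ∈ unitaryGroup n ℝ)
    (j : n) :
    ∑ i, W i j ^ 2 = 1 := by
  have := congrFun (congrFun (mem_unitaryGroup_iff'.mp hW) j) j
  simpa [mul_apply, sq] using this

namespace IsHermitian

variable {A : Matrix n n ℝ}

theorem exists_mem_unitaryGroup_eq_mul_diagonal_mul_star (hA : A.IsHermitian) :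
    ∃ U ∈ unitaryGroup n ℝ, A = U * diagonal hA.eigenvalues * star U :=
  ⟨_, hA.eigenvectorUnitary.2, by conv_lhs => rw [hA.spectral_theorem]; simp⟩

noncomputable def schattenNorm (hA : A.IsHermitian) (p : ℝ) : ℝ :=
  (∑ i, |hA.eigenvalues i| ^ p) ^ (1 / p)

theorem schattenNorm_nonneg (hA : A.IsHermitian) (p : ℝ) : 0 ≤ hA.schattenNorm p :=
  Real.rpow_nonneg (sum_nonneg fun _ _ => by positivity) _

theorem schattenNorm_fin_two {A : Matrix (Fin 2) (Fin 2) ℝ} (hA : A.IsHermitian) (p : ℝ) :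
    hA.schattenNorm p = (|hA.eigenvalues 0| ^ p + |hA.eigenvalues 1| ^ p) ^ (1 / p) := by
  rw [schattenNorm, Fin.sum_univ_two]

theorem exists_mem_unitaryGroup_trace_mul_eq {B : Matrix n n ℝ} (hA : A.IsHermitian)
    (hB : B.IsHermitian) : ∃ W ∈ unitaryGroup n ℝ,
      (A * B).trace = ∑ i, ∑ j, W i j ^ 2 * (hA.eigenvalues i * hB.eigenvalues j) := by
  obtain ⟨U, hU, hAU⟩ := hA.exists_mem_unitaryGroup_eq_mul_diagonal_mul_star
  obtain ⟨V, hV, hBV⟩ := hB.exists_mem_unitaryGroup_eq_mul_diagonal_mul_star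
  refine ⟨star U * V, mul_mem (Unitary.star_mem hU) hV, ?_⟩
  have hAB : A * B = U * (diagonal hA.eigenvalues * (star U * V) * diagonal hB.eigenvalues *
      star (star U * V)) * star U := by
    conv_lhs => rw [hAU, hBV]
    simp only [star_mul, star_star, Matrix.mul_assoc, mem_unitaryGroup_iff.mp hU, Matrix.mul_one]
  rw [hAB, trace_mul_mul_star_of_mem_unitaryGroup hU, trace_diagonal_mul_mul_diagonal_mul_star]

theorem trace_mul_le_schattenNorm_mul {B : Matrix n n ℝ} {p q : ℝ} (hpq : p.HolderConjugate q)
    (hA : A.IsHermitian) (hB : B.IsHermitian) :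
    (A * B).trace ≤ hA.schattenNorm p * hB.schattenNorm q := by
  obtain ⟨W, hW, htr⟩ := exists_mem_unitaryGroup_trace_mul_eq hA hB
  have hweights := Real.inner_le_weighted_Lp_mul_Lq univ hpq (fun ij : n × n => W ij.1 ij.2 ^ 2)
    (fun ij => hA.eigenvalues ij.1) (fun ij => hB.eigenvalues ij.2) fun _ _ => sq_nonneg _
  simp only [← univ_product_univ, sum_product] at hweights
  calc (A * B).trace = ∑ i, ∑ j, W i j ^ 2 * (hA.eigenvalues i * hB.eigenvalues j) := htr
    _ ≤ (∑ i, ∑ j, W i j ^ 2 * |hA.eigenvalues i| ^ p) ^ (1 / p) *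
          (∑ i, ∑ j, W i j ^ 2 * |hB.eigenvalues j| ^ q) ^ (1 / q) := hweights
    _ = hA.schattenNorm p * hB.schattenNorm q := by
        rw [sum_comm (f := fun i j => W i j ^ 2 * |hB.eigenvalues j| ^ q)]
        simp only [← sum_mul, sum_row_sq_eq_one_of_mem_unitaryGroup hW,
          sum_col_sq_eq_one_of_mem_unitaryGroup hW, one_mul, schattenNorm]

open Polynomial in
theorem sum_comp_eigenvalues_of_eq_mul_diagonal_mul_star {N U : Matrix n n ℝ}
    (hN : N.IsHermitian) (hU : U ∈ unitaryGroup n ℝ) {d : n → ℝ}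
    (hNd : N = U * diagonal d * star U) (f : ℝ → ℝ) :
    ∑ i, f (hN.eigenvalues i) = ∑ i, f (d i) := by
  have hcharN : N.charpoly = ∏ i, (X - C (hN.eigenvalues i)) := by simpa using hN.charpoly_eq
  have hchar : ∏ i, (X - C (hN.eigenvalues i)) = ∏ i, (X - C (d i)) := by
    rw [← hcharN, hNd, charpoly_mul_comm, ← Matrix.mul_assoc, mem_unitaryGroup_iff'.mp hU,
      Matrix.one_mul, charpoly_diagonal]
  have hroots_prod (g : n → ℝ) : (∏ i, (X - C (g i))).roots = univ.val.map g := by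
    rw [roots_prod _ _ (prod_ne_zero_iff.mpr fun i _ => X_sub_C_ne_zero _)]
    simp
  have hroots : univ.val.map hN.eigenvalues = univ.val.map d := by
    rw [← hroots_prod, ← hroots_prod, hchar]
  calc ∑ i, f (hN.eigenvalues i) = ((univ.val.map hN.eigenvalues).map f).sum := by
        rw [Multiset.map_map]; rfl
    _ = ∑ i, f (d i) := by rw [hroots, Multiset.map_map]; rfl

theorem exists_schattenNorm_le_trace_mul_eq {p q : ℝ} (hpq : p.HolderConjugate q)
    (hA : A.IsHermitian) {α : ℝ} (hα : 0 ≤ α) :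
    ∃ (N : Matrix n n ℝ) (hN : N.IsHermitian),
      hN.schattenNorm q ≤ α ∧ (N * A).trace = α * hA.schattenNorm p := by
  obtain ⟨U, hU, hAU⟩ := hA.exists_mem_unitaryGroup_eq_mul_diagonal_mul_star
  obtain ⟨d, hdq, hda⟩ := Real.exists_Lq_le_and_inner_eq_mul_Lp univ hpq hA.eigenvalues hα
  have hN : (U * diagonal d * star U).IsHermitian := by
    simpa [star_eq_conjTranspose] using
      isHermitian_mul_mul_conjTranspose U (isHermitian_diagonal d)
  refine ⟨_, hN, ?_, ?_⟩
  · rwa [schattenNorm, sum_comp_eigenvalues_of_eq_mul_diagonal_mul_star hN hU rfl (|·| ^ q)]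
  · have hNA : U * diagonal d * star U * A =
        U * (diagonal d * diagonal hA.eigenvalues) * star U := by
      conv_lhs => rw [hAU]
      simp only [Matrix.mul_assoc, ← Matrix.mul_assoc (star U) U, mem_unitaryGroup_iff'.mp hU,
        Matrix.one_mul]
    rw [hNA, trace_mul_mul_star_of_mem_unitaryGroup hU, diagonal_mul_diagonal, trace_diagonal,
      schattenNorm, ← hda]

end IsHermitian
end Matrix

theorem mixed_schatten_duality_general
    {G : Type*} [Fintype G]
    (M : G → Matrix (Fin 2) (Fin 2) ℝ) (hM : ∀ r, (M r).IsHermitian)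
    (αs p q : ℝ) (hαs : 0 < αs) (hp : 1 < p) (hpq : 1 / p + 1 / q = 1) :
    IsGreatest
      {x : ℝ | ∃ (N : G → Matrix (Fin 2) (Fin 2) ℝ) (hN : ∀ r, (N r).IsHermitian),
        (∀ r, (|(hN r).eigenvalues 0| ^ q + |(hN r).eigenvalues 1| ^ q) ^ (1 / q) ≤ αs) ∧
        x = ∑ r : G, (N r * M r).trace}
      (αs * ∑ r : G, (|(hM r).eigenvalues 0| ^ p + |(hM r).eigenvalues 1| ^ p) ^ (1 / p)) := by
  have hpq' : p.HolderConjugate q :=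
    Real.holderConjugate_iff.mpr ⟨hp, by simpa only [one_div] using hpq⟩
  simp only [← Matrix.IsHermitian.schattenNorm_fin_two, mul_sum]
  constructor
  · choose N hN hNq hNM using fun r => (hM r).exists_schattenNorm_le_trace_mul_eq hpq' hαs.le
    exact ⟨N, hN, hNq, (sum_congr rfl fun r _ => hNM r).symm⟩
  · rintro x ⟨N, hN, hNq, rfl⟩
    refine sum_le_sum fun r _ => ?_
    calc (N r * M r).trace ≤ (hN r).schattenNorm q * (hM r).schattenNorm p :=
          (hN r).trace_mul_le_schattenNorm_mul hpq'.symm (hM r)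
      _ ≤ αs * (hM r).schattenNorm p :=
          mul_le_mul_of_nonneg_right (hNq r) ((hM r).schattenNorm_nonneg p)

/-- Dual (maximization) representation of the mixed norm `‖M‖_{1,S(p)}`:
for a finite abelian group `G`, a symmetric-matrix image `M : G → Sym₂(ℝ)`,
`α_s > 0` and conjugate exponents `1 < p, q < ∞`, the supremum of
`∑_r trace (N r * M r)` over symmetric-matrix images `N` with
`‖N r‖_{S(q)} ≤ α_s` for all `r` equals `α_s * ∑_r ‖M r‖_{S(p)}`,
and the supremum is attained. -/
theorem mixed_schatten_duality
    {G : Type*} [AddCommGroup G] [Fintype G]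
    (M : G → Matrix (Fin 2) (Fin 2) ℝ) (hM : ∀ r, (M r).IsHermitian)
    (αs p q : ℝ) (hαs : 0 < αs) (hp : 1 < p) (hq : 1 < q) (hpq : 1 / p + 1 / q = 1) :
    IsGreatest
      {x : ℝ | ∃ (N : G → Matrix (Fin 2) (Fin 2) ℝ) (hN : ∀ r, (N r).IsHermitian),
        (∀ r, (|(hN r).eigenvalues 0| ^ q + |(hN r).eigenvalues 1| ^ q) ^ (1 / q) ≤ αs) ∧
        x = ∑ r : G, (N r * M r).trace}
      (αs * ∑ r : G, (|(hM r).eigenvalues 0| ^ p + |(hM r).eigenvalues 1| ^ p) ^ (1 / p)) :=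
  mixed_schatten_duality_general M hM αs p q hαs hp hpq
end
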